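/- arXiv:1806.10463 — 4 statements merged into one kernel-verified Lean document; each statement's English description precedes it below -/
import Mathlib

section
/- Let Δ1, Δ2, Δ3 be finite-support probability distributions over a countable set S, let ω1 be a matching for (Δ1,Δ3) and ω2 a matching for (Δ3,Δ2). Then the function ω : S×S → [0,1] defined by ω(t1,t2) = Σ_{t3∈S, Δ3(t3)≠0} ω1(t1,t3)·ω2(t3,t2)/Δ3(t3) is a matching for (Δ1,Δ2). -/
open scoped Classical

namespace Impact

noncomputable section

variable {S : Type*}

/-- The Dirac (point) distribution at `t`. -/
def dirac (t : S) : S → ℝ := fun s => if s = t then 1 else 0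

/-- The total mass of a (sub-)distribution. -/
def mass (Δ : S → ℝ) : ℝ := ∑ᶠ t, Δ t

/-- Finite-support (discrete) probability distributions. -/
def IsDist (Δ : S → ℝ) : Prop :=
  (∀ t, 0 ≤ Δ t) ∧ (Function.support Δ).Finite ∧ mass Δ = 1

/-- A matching (coupling) for a pair of distributions: a distribution on the
product space whose left marginal is `Δ` and whose right marginal is `Θ`. -/
def IsMatching (ω : S × S → ℝ) (Δ Θ : S → ℝ) : Prop :=
  IsDist ω ∧ (∀ t, (∑ᶠ t', ω (t, t')) = Δ t) ∧ (∀ t', (∑ᶠ t, ω (t, t')) = Θ t')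

/-- The Kantorovich lifting of a function `d : S × S → ℝ`. -/
def Kant (d : S → S → ℝ) (Δ Θ : S → ℝ) : ℝ :=
  sInf {x | ∃ ω, IsMatching ω Δ Θ ∧ x = ∑ᶠ q : S × S, ω q * d q.1 q.2}

end

end Impact

open Impact

private lemma sect_fin_left {α β : Type*} {ω : α × β → ℝ}
    (h : (Function.support ω).Finite) (b : β) :
    (Function.support fun a => ω (a, b)).Finite := by
  have : (Function.support fun a => ω (a, b)) ⊆
      (fun a : α => (a, b)) ⁻¹' (Function.support ω) := fun a ha => ha
  exact Set.Finite.subset (h.preimage fun x _ y _ hxy => (Prod.mk.injEq ..).mp hxy |>.1) this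

private lemma sect_fin_right {α β : Type*} {ω : α × β → ℝ}
    (h : (Function.support ω).Finite) (a : α) :
    (Function.support fun b => ω (a, b)).Finite := by
  have : (Function.support fun b => ω (a, b)) ⊆
      (fun b : β => (a, b)) ⁻¹' (Function.support ω) := fun b hb => hb
  exact Set.Finite.subset (h.preimage fun x _ y _ hxy => (Prod.mk.injEq ..).mp hxy |>.2) this

private lemma all_zero_of_finsum_zero {α : Type*} {f : α → ℝ} (hpos : ∀ a, 0 ≤ f a)
    (hfin : (Function.support f).Finite) (hsum : ∑ᶠ a, f a = 0) : ∀ a, f a = 0 := by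
  intro a
  by_cases ha : f a = 0
  · exact ha
  · rw [finsum_eq_sum f hfin] at hsum
    have := (Finset.sum_eq_zero_iff_of_nonneg (fun i _ => hpos i)).mp hsum a
      (by simpa [Set.Finite.mem_toFinset, Function.mem_support] using ha)
    exact this

/-- the composition of two matchings along a middle distribution
is a matching for the outer pair of distributions. -/
theorem stmt_0 {S : Type*} [Countable S] (Δ₁ Δ₂ Δ₃ : S → ℝ)
    (hΔ₁ : IsDist Δ₁) (hΔ₂ : IsDist Δ₂) (hΔ₃ : IsDist Δ₃)
    (ω₁ ω₂ : S × S → ℝ)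
    (h₁ : IsMatching ω₁ Δ₁ Δ₃) (h₂ : IsMatching ω₂ Δ₃ Δ₂) :
    IsMatching
      (fun q : S × S => ∑ᶠ t₃ ∈ {t₃ | Δ₃ t₃ ≠ 0}, ω₁ (q.1, t₃) * ω₂ (t₃, q.2) / Δ₃ t₃)
      Δ₁ Δ₂ := by
  obtain ⟨⟨hω₁pos, hω₁fin, hω₁mass⟩, hω₁l, hω₁r⟩ := h₁
  obtain ⟨⟨hω₂pos, hω₂fin, hω₂mass⟩, hω₂l, hω₂r⟩ := h₂
  obtain ⟨hΔ₃pos, hΔ₃fin, hΔ₃mass⟩ := hΔ₃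
  set ω : S × S → ℝ :=
    fun q : S × S => ∑ᶠ t₃ ∈ {t₃ | Δ₃ t₃ ≠ 0}, ω₁ (q.1, t₃) * ω₂ (t₃, q.2) / Δ₃ t₃ with hω
  -- the middle support as a finset
  set s₃ : Finset S := hΔ₃fin.toFinset with hs₃
  have hsupp_eq : {t₃ | Δ₃ t₃ ≠ 0} = Function.support Δ₃ := rfl
  -- ω as a finset sum
  have hωsum : ∀ q : S × S, ω q = ∑ t₃ ∈ s₃, ω₁ (q.1, t₃) * ω₂ (t₃, q.2) / Δ₃ t₃ := by
    intro q
    rw [hω, hsupp_eq]; exact finsum_mem_eq_finite_toFinset_sum _ hΔ₃fin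
  -- degenerate columns/rows
  have hcol : ∀ t₃, Δ₃ t₃ = 0 → ∀ t₁, ω₁ (t₁, t₃) = 0 := by
    intro t₃ h0 t₁
    exact all_zero_of_finsum_zero (fun t => hω₁pos (t, t₃)) (sect_fin_left hω₁fin t₃)
      (by rw [hω₁r t₃, h0]) t₁
  have hrow : ∀ t₃, Δ₃ t₃ = 0 → ∀ t₂, ω₂ (t₃, t₂) = 0 := by
    intro t₃ h0 t₂
    exact all_zero_of_finsum_zero (fun t => hω₂pos (t₃, t)) (sect_fin_right hω₂fin t₃)
      (by rw [hω₂l t₃, h0]) t₂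
  -- the bounding finsets
  set A : Finset S := (hω₁fin.toFinset).image Prod.fst with hA
  set B : Finset S := (hω₂fin.toFinset).image Prod.snd with hB
  have hsuppω : Function.support ω ⊆ ↑(A ×ˢ B) := by
    intro q hq
    rw [Function.mem_support, hωsum q] at hq
    obtain ⟨t₃, _, ht₃⟩ := Finset.exists_ne_zero_of_sum_ne_zero hq
    have h1 : ω₁ (q.1, t₃) ≠ 0 := fun h => ht₃ (by simp [h])
    have h2 : ω₂ (t₃, q.2) ≠ 0 := fun h => ht₃ (by simp [h])
    simp only [Finset.coe_product, Set.mem_prod, Finset.mem_coe, hA, hB,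
      Finset.mem_image, Set.Finite.mem_toFinset, Function.mem_support]
    exact ⟨⟨(q.1, t₃), h1, rfl⟩, ⟨(t₃, q.2), h2, rfl⟩⟩
  -- left marginal
  have hml : ∀ t₁, (∑ᶠ t₂, ω (t₁, t₂)) = Δ₁ t₁ := by
    intro t₁
    have hsub : Function.support (fun t₂ => ω (t₁, t₂)) ⊆ ↑B := by
      intro t₂ ht₂
      have := hsuppω ht₂
      simp only [Finset.coe_product, Set.mem_prod, Finset.mem_coe] at this
      exact this.2
    rw [finsum_eq_finset_sum_of_support_subset _ hsub]
    have : ∀ t₂, ω (t₁, t₂) = ∑ t₃ ∈ s₃, ω₁ (t₁, t₃) * ω₂ (t₃, t₂) / Δ₃ t₃ := fun t₂ => hωsum (t₁, t₂)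
    simp_rw [this]
    rw [Finset.sum_comm]
    have hterm : ∀ t₃ ∈ s₃, (∑ t₂ ∈ B, ω₁ (t₁, t₃) * ω₂ (t₃, t₂) / Δ₃ t₃) = ω₁ (t₁, t₃) := by
      intro t₃ ht₃
      have hne : Δ₃ t₃ ≠ 0 := by
        simpa [hs₃, Set.Finite.mem_toFinset, Function.mem_support] using ht₃
      have hBsum : (∑ t₂ ∈ B, ω₂ (t₃, t₂)) = Δ₃ t₃ := by
        rw [← hω₂l t₃]
        refine (finsum_eq_finset_sum_of_support_subset _ ?_).symm
        intro t₂ ht₂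
        simp only [hB, Finset.coe_image, Set.Finite.coe_toFinset]
        exact ⟨(t₃, t₂), ht₂, rfl⟩
      calc (∑ t₂ ∈ B, ω₁ (t₁, t₃) * ω₂ (t₃, t₂) / Δ₃ t₃)
          = (ω₁ (t₁, t₃) / Δ₃ t₃) * ∑ t₂ ∈ B, ω₂ (t₃, t₂) := by
            rw [Finset.mul_sum]; congr 1; ext t₂; ring
        _ = ω₁ (t₁, t₃) := by rw [hBsum]; field_simp
    rw [Finset.sum_congr rfl hterm]
    rw [← hω₁l t₁]
    refine (finsum_eq_finset_sum_of_support_subset _ ?_).symm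
    intro t₃ ht₃
    simp only [hs₃, Set.Finite.coe_toFinset, Function.mem_support]
    intro h0
    exact ht₃ (hcol t₃ h0 t₁)
  -- right marginal
  have hmr : ∀ t₂, (∑ᶠ t₁, ω (t₁, t₂)) = Δ₂ t₂ := by
    intro t₂
    have hsub : Function.support (fun t₁ => ω (t₁, t₂)) ⊆ ↑A := by
      intro t₁ ht₁
      have := hsuppω ht₁
      simp only [Finset.coe_product, Set.mem_prod, Finset.mem_coe] at this
      exact this.1
    rw [finsum_eq_finset_sum_of_support_subset _ hsub]
    have : ∀ t₁, ω (t₁, t₂) = ∑ t₃ ∈ s₃, ω₁ (t₁, t₃) * ω₂ (t₃, t₂) / Δ₃ t₃ := fun t₁ => hωsum (t₁, t₂)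
    simp_rw [this]
    rw [Finset.sum_comm]
    have hterm : ∀ t₃ ∈ s₃, (∑ t₁ ∈ A, ω₁ (t₁, t₃) * ω₂ (t₃, t₂) / Δ₃ t₃) = ω₂ (t₃, t₂) := by
      intro t₃ ht₃
      have hne : Δ₃ t₃ ≠ 0 := by
        simpa [hs₃, Set.Finite.mem_toFinset, Function.mem_support] using ht₃
      have hAsum : (∑ t₁ ∈ A, ω₁ (t₁, t₃)) = Δ₃ t₃ := by
        rw [← hω₁r t₃]
        refine (finsum_eq_finset_sum_of_support_subset _ ?_).symm
        intro t₁ ht₁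
        simp only [hA, Finset.coe_image, Set.Finite.coe_toFinset]
        exact ⟨(t₁, t₃), ht₁, rfl⟩
      calc (∑ t₁ ∈ A, ω₁ (t₁, t₃) * ω₂ (t₃, t₂) / Δ₃ t₃)
          = (ω₂ (t₃, t₂) / Δ₃ t₃) * ∑ t₁ ∈ A, ω₁ (t₁, t₃) := by
            rw [Finset.mul_sum]; congr 1; ext t₁; ring
        _ = ω₂ (t₃, t₂) := by rw [hAsum]; field_simp
    rw [Finset.sum_congr rfl hterm]
    rw [← hω₂r t₂]
    refine (finsum_eq_finset_sum_of_support_subset _ ?_).symm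
    intro t₃ ht₃
    simp only [hs₃, Set.Finite.coe_toFinset, Function.mem_support]
    intro h0
    exact ht₃ (hrow t₃ h0 t₂)
  refine ⟨⟨?_, ?_, ?_⟩, hml, hmr⟩
  · -- nonneg
    intro q
    rw [hωsum q]
    refine Finset.sum_nonneg fun t₃ _ => ?_
    exact div_nonneg (mul_nonneg (hω₁pos _) (hω₂pos _)) (hΔ₃pos t₃)
  · -- finite support
    exact Set.Finite.subset (A ×ˢ B).finite_toSet hsuppω
  · -- mass
    rw [mass, finsum_eq_finset_sum_of_support_subset _ hsuppω, Finset.sum_product]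
    have hinner : ∀ t₁ ∈ A, (∑ t₂ ∈ B, ω (t₁, t₂)) = Δ₁ t₁ := by
      intro t₁ _
      rw [← hml t₁]
      refine (finsum_eq_finset_sum_of_support_subset _ ?_).symm
      intro t₂ ht₂
      have := hsuppω ht₂
      simp only [Finset.coe_product, Set.mem_prod, Finset.mem_coe] at this
      exact this.2
    rw [Finset.sum_congr rfl hinner]
    obtain ⟨hΔ₁pos, hΔ₁fin, hΔ₁mass⟩ := hΔ₁
    rw [← hΔ₁mass, mass]
    refine (finsum_eq_finset_sum_of_support_subset _ ?_).symm
    intro t₁ ht₁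
    have : (∑ᶠ t₂, ω₁ (t₁, t₂)) ≠ 0 := by rw [hω₁l t₁]; exact ht₁
    have hex : ∃ t₂, ω₁ (t₁, t₂) ≠ 0 := by
      by_contra hc
      push_neg at hc
      exact this (by simp [hc])
    obtain ⟨t₂, ht₂⟩ := hex
    simp only [hA, Finset.coe_image, Set.Finite.coe_toFinset]
    exact ⟨(t₁, t₂), ht₂, rfl⟩
end

section
/- Let d, d' : S×S → [0,1] satisfy d(t,t') ≤ d'(t,t'') + d'(t'',t') for all t,t',t'' ∈ S. Let Δ1, Δ2, Δ3 ∈ D(S), let ω1 ∈ Ω(Δ1,Δ3) and ω2 ∈ Ω(Δ3,Δ2), and let ω(t1,t2) = Σ_{t3∈S, Δ3(t3)≠0} ω1(t1,t3)·ω2(t3,t2)/Δ3(t3). Then Σ_{t1,t2∈S} ω(t1,t2)·d(t1,t2) ≤ Σ_{t1,t3∈S} ω1(t1,t3)·d'(t1,t3) + Σ_{t3,t2∈S} ω2(t3,t2)·d'(t3,t2). -/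
open scoped Classical

open Impact

section Aux

variable {S : Type*}

/-- If the second marginal of a nonnegative finite-support `ω` vanishes at `t'`,
then `ω (t, t')` vanishes for all `t`; similarly for the first marginal. -/
lemma matching_ne_zero {ω : S × S → ℝ} {Δ Θ : S → ℝ} (h : IsMatching ω Δ Θ)
    {t t' : S} (h0 : ω (t, t') ≠ 0) : Δ t ≠ 0 ∧ Θ t' ≠ 0 := by
  obtain ⟨⟨hpos, hfin, _⟩, hl, hr⟩ := h
  have hpos' : 0 < ω (t, t') := lt_of_le_of_ne (hpos _) (Ne.symm h0)
  constructor
  · have hfin1 : (Function.support fun t'' => ω (t, t'')).Finite := by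
      apply hfin.preimage (f := fun t'' => (t, t''))
      intro a _ b _ hab
      simpa using congrArg Prod.snd hab
    have : ω (t, t') ≤ ∑ᶠ t'', ω (t, t'') := by
      rw [finsum_eq_sum _ hfin1]
      exact Finset.single_le_sum (fun i _ => hpos _) (hfin1.mem_toFinset.2 h0)
    rw [hl t] at this
    exact ne_of_gt (lt_of_lt_of_le hpos' this)
  · have hfin2 : (Function.support fun t'' => ω (t'', t')).Finite := by
      apply hfin.preimage (f := fun t'' => (t'', t'))
      intro a _ b _ hab
      simpa using congrArg Prod.fst hab
    have : ω (t, t') ≤ ∑ᶠ t'', ω (t'', t') := by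
      rw [finsum_eq_sum _ hfin2]
      exact Finset.single_le_sum (f := fun t'' => ω (t'', t')) (fun i _ => hpos _) (hfin2.mem_toFinset.2 h0)
    rw [hr t'] at this
    exact ne_of_gt (lt_of_lt_of_le hpos' this)

end Aux

/-- the cost of the composed matching w.r.t. `d` is bounded by the
sum of the costs of the two given matchings w.r.t. `d'`. -/
theorem stmt_1 {S : Type*} [Countable S] (d d' : S → S → ℝ)
    (hd : ∀ t t', d t t' ∈ Set.Icc (0 : ℝ) 1) (hd' : ∀ t t', d' t t' ∈ Set.Icc (0 : ℝ) 1)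
    (htri : ∀ t t' t'', d t t' ≤ d' t t'' + d' t'' t')
    (Δ₁ Δ₂ Δ₃ : S → ℝ) (hΔ₁ : IsDist Δ₁) (hΔ₂ : IsDist Δ₂) (hΔ₃ : IsDist Δ₃)
    (ω₁ ω₂ : S × S → ℝ)
    (h₁ : IsMatching ω₁ Δ₁ Δ₃) (h₂ : IsMatching ω₂ Δ₃ Δ₂) :
    (∑ᶠ q : S × S,
        (∑ᶠ t₃ ∈ {t₃ | Δ₃ t₃ ≠ 0}, ω₁ (q.1, t₃) * ω₂ (t₃, q.2) / Δ₃ t₃) * d q.1 q.2)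
      ≤ (∑ᶠ q : S × S, ω₁ q * d' q.1 q.2) + (∑ᶠ q : S × S, ω₂ q * d' q.1 q.2) := by
  classical
  set A : Finset S := hΔ₁.2.1.toFinset with hA
  set B : Finset S := hΔ₂.2.1.toFinset with hB
  set C : Finset S := hΔ₃.2.1.toFinset with hC
  have hA' : ∀ t : S, Δ₁ t ≠ 0 → t ∈ A := fun t ht => hΔ₁.2.1.mem_toFinset.2 ht
  have hB' : ∀ t : S, Δ₂ t ≠ 0 → t ∈ B := fun t ht => hΔ₂.2.1.mem_toFinset.2 ht
  have hC' : ∀ t : S, Δ₃ t ≠ 0 → t ∈ C := fun t ht => hΔ₃.2.1.mem_toFinset.2 ht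
  have hω₁0 : ∀ q, 0 ≤ ω₁ q := h₁.1.1
  have hω₂0 : ∀ q, 0 ≤ ω₂ q := h₂.1.1
  have hΔ₃0 : ∀ t, 0 ≤ Δ₃ t := hΔ₃.1
  -- rewrite the inner finsum as a finset sum over C
  have hCset : {t₃ | Δ₃ t₃ ≠ 0} = (C : Set S) := by
    ext x; simp [hC, Set.Finite.mem_toFinset, Function.mem_support]
  have hinner : ∀ q : S × S,
      (∑ᶠ t₃ ∈ {t₃ | Δ₃ t₃ ≠ 0}, ω₁ (q.1, t₃) * ω₂ (t₃, q.2) / Δ₃ t₃)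
        = ∑ t₃ ∈ C, ω₁ (q.1, t₃) * ω₂ (t₃, q.2) / Δ₃ t₃ := by
    intro q
    rw [hCset, finsum_mem_coe_finset]
  -- marginal identities over finsets
  have hmarg₂ : ∀ t₃ : S, (∑ t₂ ∈ B, ω₂ (t₃, t₂)) = Δ₃ t₃ := by
    intro t₃
    rw [← h₂.2.1 t₃]
    symm
    apply finsum_eq_finset_sum_of_support_subset
    intro t₂ ht₂
    exact hB' t₂ (matching_ne_zero h₂ ht₂).2
  have hmarg₁ : ∀ t₃ : S, (∑ t₁ ∈ A, ω₁ (t₁, t₃)) = Δ₃ t₃ := by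
    intro t₃
    rw [← h₁.2.2 t₃]
    symm
    apply finsum_eq_finset_sum_of_support_subset
    intro t₁ ht₁
    exact hA' t₁ (matching_ne_zero h₁ ht₁).1
  -- the LHS as a finset sum over A ×ˢ B
  have hLHS : (∑ᶠ q : S × S,
      (∑ᶠ t₃ ∈ {t₃ | Δ₃ t₃ ≠ 0}, ω₁ (q.1, t₃) * ω₂ (t₃, q.2) / Δ₃ t₃) * d q.1 q.2)
      = ∑ q ∈ A ×ˢ B, (∑ t₃ ∈ C, ω₁ (q.1, t₃) * ω₂ (t₃, q.2) / Δ₃ t₃) * d q.1 q.2 := by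
    rw [show (fun q : S × S =>
        (∑ᶠ t₃ ∈ {t₃ | Δ₃ t₃ ≠ 0}, ω₁ (q.1, t₃) * ω₂ (t₃, q.2) / Δ₃ t₃) * d q.1 q.2)
        = fun q : S × S => (∑ t₃ ∈ C, ω₁ (q.1, t₃) * ω₂ (t₃, q.2) / Δ₃ t₃) * d q.1 q.2
      from funext fun q => by rw [hinner q]]
    apply finsum_eq_finset_sum_of_support_subset
    intro q hq
    have hsum : (∑ t₃ ∈ C, ω₁ (q.1, t₃) * ω₂ (t₃, q.2) / Δ₃ t₃) ≠ 0 := by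
      intro h; apply hq; simp [h]
    obtain ⟨t₃, _, ht₃⟩ := Finset.exists_ne_zero_of_sum_ne_zero hsum
    have hω₁ : ω₁ (q.1, t₃) ≠ 0 := by
      intro h; apply ht₃; simp [h]
    have hω₂ : ω₂ (t₃, q.2) ≠ 0 := by
      intro h; apply ht₃; simp [h]
    have h1 := (matching_ne_zero h₁ hω₁).1
    have h2 := (matching_ne_zero h₂ hω₂).2
    exact Finset.mem_product.2 ⟨hA' _ h1, hB' _ h2⟩
  -- the RHS pieces as finset sums
  have hR1 : (∑ᶠ q : S × S, ω₁ q * d' q.1 q.2)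
      = ∑ t₁ ∈ A, ∑ t₃ ∈ C, ω₁ (t₁, t₃) * d' t₁ t₃ := by
    have step : (∑ᶠ q : S × S, ω₁ q * d' q.1 q.2)
        = ∑ q ∈ A ×ˢ C, ω₁ q * d' q.1 q.2 := by
      apply finsum_eq_finset_sum_of_support_subset
      intro q hq
      have hω : ω₁ q ≠ 0 := by
        intro h; apply hq; simp [h]
      obtain ⟨ha, hc⟩ := matching_ne_zero h₁ (by simpa using hω)
      exact Finset.mem_product.2 ⟨hA' _ ha, hC' _ hc⟩
    rw [step, Finset.sum_product]
  have hR2 : (∑ᶠ q : S × S, ω₂ q * d' q.1 q.2)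
      = ∑ t₃ ∈ C, ∑ t₂ ∈ B, ω₂ (t₃, t₂) * d' t₃ t₂ := by
    have step : (∑ᶠ q : S × S, ω₂ q * d' q.1 q.2)
        = ∑ q ∈ C ×ˢ B, ω₂ q * d' q.1 q.2 := by
      apply finsum_eq_finset_sum_of_support_subset
      intro q hq
      have hω : ω₂ q ≠ 0 := by
        intro h; apply hq; simp [h]
      obtain ⟨hc, hb⟩ := matching_ne_zero h₂ (by simpa using hω)
      exact Finset.mem_product.2 ⟨hC' _ hc, hB' _ hb⟩
    rw [step, Finset.sum_product]
  rw [hLHS, hR1, hR2]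
  -- pointwise triangle inequality bound
  have key : ∑ q ∈ A ×ˢ B, (∑ t₃ ∈ C, ω₁ (q.1, t₃) * ω₂ (t₃, q.2) / Δ₃ t₃) * d q.1 q.2
      ≤ ∑ q ∈ A ×ˢ B, ∑ t₃ ∈ C,
          ω₁ (q.1, t₃) * ω₂ (t₃, q.2) / Δ₃ t₃ * (d' q.1 t₃ + d' t₃ q.2) := by
    apply Finset.sum_le_sum
    intro q _
    rw [Finset.sum_mul]
    apply Finset.sum_le_sum
    intro t₃ _
    have hnn : 0 ≤ ω₁ (q.1, t₃) * ω₂ (t₃, q.2) / Δ₃ t₃ :=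
      div_nonneg (mul_nonneg (hω₁0 _) (hω₂0 _)) (hΔ₃0 _)
    exact mul_le_mul_of_nonneg_left (htri q.1 q.2 t₃) hnn
  refine le_trans key ?_
  -- split and collapse
  have split : ∑ q ∈ A ×ˢ B, ∑ t₃ ∈ C,
      ω₁ (q.1, t₃) * ω₂ (t₃, q.2) / Δ₃ t₃ * (d' q.1 t₃ + d' t₃ q.2)
      = (∑ q ∈ A ×ˢ B, ∑ t₃ ∈ C, ω₁ (q.1, t₃) * ω₂ (t₃, q.2) / Δ₃ t₃ * d' q.1 t₃)
        + ∑ q ∈ A ×ˢ B, ∑ t₃ ∈ C, ω₁ (q.1, t₃) * ω₂ (t₃, q.2) / Δ₃ t₃ * d' t₃ q.2 := by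
    rw [← Finset.sum_add_distrib]
    apply Finset.sum_congr rfl
    intro q _
    rw [← Finset.sum_add_distrib]
    apply Finset.sum_congr rfl
    intro t₃ _
    ring
  rw [split]
  have part1 : (∑ q ∈ A ×ˢ B, ∑ t₃ ∈ C, ω₁ (q.1, t₃) * ω₂ (t₃, q.2) / Δ₃ t₃ * d' q.1 t₃)
      = ∑ t₁ ∈ A, ∑ t₃ ∈ C, ω₁ (t₁, t₃) * d' t₁ t₃ := by
    rw [Finset.sum_product]
    apply Finset.sum_congr rfl
    intro t₁ _
    rw [Finset.sum_comm]
    apply Finset.sum_congr rfl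
    intro t₃ _
    have : ∑ t₂ ∈ B, ω₁ (t₁, t₃) * ω₂ (t₃, t₂) / Δ₃ t₃ * d' t₁ t₃
        = ω₁ (t₁, t₃) * d' t₁ t₃ / Δ₃ t₃ * ∑ t₂ ∈ B, ω₂ (t₃, t₂) := by
      rw [Finset.mul_sum]
      apply Finset.sum_congr rfl
      intro t₂ _
      ring
    rw [this, hmarg₂ t₃]
    by_cases h0 : Δ₃ t₃ = 0
    · have : ω₁ (t₁, t₃) = 0 := by
        by_contra h
        exact (matching_ne_zero h₁ h).2 h0
      simp [this, h0]
    · field_simp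
  have part2 : (∑ q ∈ A ×ˢ B, ∑ t₃ ∈ C, ω₁ (q.1, t₃) * ω₂ (t₃, q.2) / Δ₃ t₃ * d' t₃ q.2)
      = ∑ t₃ ∈ C, ∑ t₂ ∈ B, ω₂ (t₃, t₂) * d' t₃ t₂ := by
    rw [Finset.sum_comm]
    apply Finset.sum_congr rfl
    intro t₃ _
    rw [Finset.sum_product, Finset.sum_comm]
    apply Finset.sum_congr rfl
    intro t₂ _
    have : ∑ t₁ ∈ A, ω₁ (t₁, t₃) * ω₂ (t₃, t₂) / Δ₃ t₃ * d' t₃ t₂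
        = ω₂ (t₃, t₂) * d' t₃ t₂ / Δ₃ t₃ * ∑ t₁ ∈ A, ω₁ (t₁, t₃) := by
      rw [Finset.mul_sum]
      apply Finset.sum_congr rfl
      intro t₁ _
      ring
    rw [this, hmarg₁ t₃]
    by_cases h0 : Δ₃ t₃ = 0
    · have : ω₂ (t₃, t₂) = 0 := by
        by_contra h
        exact (matching_ne_zero h₂ h).1 h0
      simp [this, h0]
    · field_simp
  rw [part1, part2]
end

section
/- Assume two functions d, d' : S×S → [0,1] with d(t,t') ≤ d'(t,t'') + d'(t'',t') for all terms t,t',t'' ∈ S. Then K(d)(Δ1,Δ2) ≤ K(d')(Δ1,Δ3) + K(d')(Δ3,Δ2) for all distributions Δ1,Δ2,Δ3 ∈ D(S). -/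
open scoped Classical

open Impact

namespace StmtAux

variable {S : Type*}

lemma cancel_aux {a c : ℝ} (h : c = 0 → a = 0) : a / c * c = a := by
  rcases eq_or_ne c 0 with hc | hc
  · simp [hc, h hc]
  · rw [div_mul_cancel₀ _ hc]

/-- the product coupling is a matching -/
lemma prod_matching {Δ Θ : S → ℝ} (hΔ : IsDist Δ) (hΘ : IsDist Θ) :
    IsMatching (fun p : S × S => Δ p.1 * Θ p.2) Δ Θ := by
  obtain ⟨hΔ0, hΔf, hΔm⟩ := hΔ
  obtain ⟨hΘ0, hΘf, hΘm⟩ := hΘ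
  have hsupp : Function.support (fun p : S × S => Δ p.1 * Θ p.2) ⊆
      ↑(hΔf.toFinset ×ˢ hΘf.toFinset) := by
    intro p hp
    have h1 : Δ p.1 ≠ 0 := fun h => hp (by simp [h])
    have h2 : Θ p.2 ≠ 0 := fun h => hp (by simp [h])
    simp only [Finset.coe_product, Set.mem_prod, Set.Finite.coe_toFinset]
    exact ⟨h1, h2⟩
  have hsumΔ : ∑ t ∈ hΔf.toFinset, Δ t = 1 := by
    rw [← finsum_eq_sum_of_support_subset Δ (by simp)]; exact hΔm
  have hsumΘ : ∑ t ∈ hΘf.toFinset, Θ t = 1 := by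
    rw [← finsum_eq_sum_of_support_subset Θ (by simp)]; exact hΘm
  refine ⟨⟨fun p => mul_nonneg (hΔ0 _) (hΘ0 _),
      ((hΔf.toFinset ×ˢ hΘf.toFinset).finite_toSet).subset hsupp, ?_⟩, ?_, ?_⟩
  · show (∑ᶠ p : S × S, Δ p.1 * Θ p.2) = 1
    rw [finsum_eq_sum_of_support_subset _ hsupp, Finset.sum_product]
    simp only [← Finset.mul_sum, hsumΘ, mul_one, hsumΔ]
  · intro t
    have hs : Function.support (fun t' => Δ t * Θ t') ⊆ ↑hΘf.toFinset := by
      intro t' h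
      have : Θ t' ≠ 0 := fun hz => h (by simp [hz])
      simpa using this
    rw [finsum_eq_sum_of_support_subset _ hs, ← Finset.mul_sum, hsumΘ, mul_one]
  · intro t'
    have hs : Function.support (fun t => Δ t * Θ t') ⊆ ↑hΔf.toFinset := by
      intro t h
      have : Δ t ≠ 0 := fun hz => h (by simp [hz])
      simpa using this
    rw [finsum_eq_sum_of_support_subset _ hs, ← Finset.sum_mul, hsumΔ, one_mul]

/-- The gluing lemma together with the cost estimate. -/
lemma glue (d d' : S → S → ℝ)
    (htri : ∀ t t' t'', d t t' ≤ d' t t'' + d' t'' t')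
    {Δ₁ Δ₂ Δ₃ : S → ℝ} (hΔ1 : IsDist Δ₁) {ω1 ω2 : S × S → ℝ}
    (hm1 : IsMatching ω1 Δ₁ Δ₃) (hm2 : IsMatching ω2 Δ₃ Δ₂) :
    ∃ ω, IsMatching ω Δ₁ Δ₂ ∧
      (∑ᶠ q : S × S, ω q * d q.1 q.2) ≤
        (∑ᶠ q : S × S, ω1 q * d' q.1 q.2) + (∑ᶠ q : S × S, ω2 q * d' q.1 q.2) := by
  obtain ⟨⟨hω1pos, hω1fin, hω1mass⟩, hω1l, hω1r⟩ := hm1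
  obtain ⟨⟨hω2pos, hω2fin, hω2mass⟩, hω2l, hω2r⟩ := hm2
  set T : Finset S :=
    ((hω1fin.toFinset.image Prod.fst ∪ hω1fin.toFinset.image Prod.snd) ∪
      hω2fin.toFinset.image Prod.fst) ∪ hω2fin.toFinset.image Prod.snd with hT
  have mem1 : ∀ {t s : S}, ω1 (t, s) ≠ 0 → t ∈ T ∧ s ∈ T := by
    intro t s h
    constructor
    · simp only [hT, Finset.mem_union, Finset.mem_image, Set.Finite.mem_toFinset,
        Function.mem_support]
      exact Or.inl (Or.inl (Or.inl ⟨(t, s), h, rfl⟩))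
    · simp only [hT, Finset.mem_union, Finset.mem_image, Set.Finite.mem_toFinset,
        Function.mem_support]
      exact Or.inl (Or.inl (Or.inr ⟨(t, s), h, rfl⟩))
  have mem2 : ∀ {s t : S}, ω2 (s, t) ≠ 0 → s ∈ T ∧ t ∈ T := by
    intro s t h
    constructor
    · simp only [hT, Finset.mem_union, Finset.mem_image, Set.Finite.mem_toFinset,
        Function.mem_support]
      exact Or.inl (Or.inr ⟨(s, t), h, rfl⟩)
    · simp only [hT, Finset.mem_union, Finset.mem_image, Set.Finite.mem_toFinset,
        Function.mem_support]
      exact Or.inr ⟨(s, t), h, rfl⟩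
  -- row/column sums
  have r1 : ∀ t, ∑ s ∈ T, ω1 (t, s) = Δ₁ t := by
    intro t
    rw [← hω1l t]
    exact (finsum_eq_sum_of_support_subset _ (fun s hs => (mem1 hs).2)).symm
  have c1 : ∀ s, ∑ t ∈ T, ω1 (t, s) = Δ₃ s := by
    intro s
    rw [← hω1r s]
    exact (finsum_eq_sum_of_support_subset _ (fun t ht => (mem1 ht).1)).symm
  have r2 : ∀ s, ∑ t' ∈ T, ω2 (s, t') = Δ₃ s := by
    intro s
    rw [← hω2l s]
    exact (finsum_eq_sum_of_support_subset _ (fun t ht => (mem2 ht).2)).symm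
  have c2 : ∀ t', ∑ s ∈ T, ω2 (s, t') = Δ₂ t' := by
    intro t'
    rw [← hω2r t']
    exact (finsum_eq_sum_of_support_subset _ (fun s hs => (mem2 hs).1)).symm
  have h3nn : ∀ s, 0 ≤ Δ₃ s := by
    intro s; rw [← c1 s]; exact Finset.sum_nonneg fun t _ => hω1pos _
  have z1 : ∀ t s, Δ₃ s = 0 → ω1 (t, s) = 0 := by
    intro t s hz
    by_cases ht : t ∈ T
    · exact (Finset.sum_eq_zero_iff_of_nonneg (fun t _ => hω1pos (t, s))).1
        ((c1 s).trans hz) t ht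
    · by_contra h; exact ht (mem1 h).1
  have z2 : ∀ s t, Δ₃ s = 0 → ω2 (s, t) = 0 := by
    intro s t hz
    by_cases ht : t ∈ T
    · exact (Finset.sum_eq_zero_iff_of_nonneg (fun t' _ => hω2pos (s, t'))).1
        ((r2 s).trans hz) t ht
    · by_contra h; exact ht (mem2 h).2
  -- the glued coupling
  set ω : S × S → ℝ := fun p => ∑ s ∈ T, ω1 (p.1, s) * ω2 (s, p.2) / Δ₃ s with hωdef
  have ωnn : ∀ p, 0 ≤ ω p := fun p => Finset.sum_nonneg fun s _ =>
    div_nonneg (mul_nonneg (hω1pos _) (hω2pos _)) (h3nn s)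
  have ωsupp : ∀ {p : S × S}, ω p ≠ 0 → p.1 ∈ T ∧ p.2 ∈ T := by
    intro p h
    obtain ⟨s, _, hs⟩ := Finset.exists_ne_zero_of_sum_ne_zero h
    have h1 : ω1 (p.1, s) ≠ 0 := by intro hz; apply hs; simp [hz]
    have h2 : ω2 (s, p.2) ≠ 0 := by intro hz; apply hs; simp [hz]
    exact ⟨(mem1 h1).1, (mem2 h2).2⟩
  have ωsuppset : Function.support ω ⊆ ↑(T ×ˢ T) := by
    intro p hp
    have h := ωsupp hp
    simp only [Finset.coe_product, Set.mem_prod, Finset.mem_coe]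
    exact h
  have margl : ∀ t, ∑ t' ∈ T, ω (t, t') = Δ₁ t := by
    intro t
    calc ∑ t' ∈ T, ω (t, t')
        = ∑ s ∈ T, ∑ t' ∈ T, ω1 (t, s) * ω2 (s, t') / Δ₃ s := Finset.sum_comm
      _ = ∑ s ∈ T, ω1 (t, s) := by
          refine Finset.sum_congr rfl fun s _ => ?_
          rw [Finset.sum_congr rfl fun t' _ =>
            (show ω1 (t, s) * ω2 (s, t') / Δ₃ s = ω1 (t, s) / Δ₃ s * ω2 (s, t') by ring),
            ← Finset.mul_sum, r2 s]
          exact cancel_aux (z1 t s)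
      _ = Δ₁ t := r1 t
  have margr : ∀ t', ∑ t ∈ T, ω (t, t') = Δ₂ t' := by
    intro t'
    calc ∑ t ∈ T, ω (t, t')
        = ∑ s ∈ T, ∑ t ∈ T, ω1 (t, s) * ω2 (s, t') / Δ₃ s := Finset.sum_comm
      _ = ∑ s ∈ T, ω2 (s, t') := by
          refine Finset.sum_congr rfl fun s _ => ?_
          rw [Finset.sum_congr rfl fun t _ =>
            (show ω1 (t, s) * ω2 (s, t') / Δ₃ s = ω2 (s, t') / Δ₃ s * ω1 (t, s) by ring),
            ← Finset.mul_sum, c1 s]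
          exact cancel_aux (z2 s t')
      _ = Δ₂ t' := c2 t'
  have finsl : ∀ t, (∑ᶠ t', ω (t, t')) = Δ₁ t := by
    intro t
    rw [finsum_eq_sum_of_support_subset (fun t' => ω (t, t')) (s := T)
      (fun t' h => (ωsupp h).2)]
    exact margl t
  have finsr : ∀ t', (∑ᶠ t, ω (t, t')) = Δ₂ t' := by
    intro t'
    rw [finsum_eq_sum_of_support_subset (fun t => ω (t, t')) (s := T)
      (fun t h => (ωsupp h).1)]
    exact margr t'
  have suppΔ1 : Function.support Δ₁ ⊆ ↑T := by
    intro t ht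
    rw [Function.mem_support, ← r1 t] at ht
    obtain ⟨s, _, hs⟩ := Finset.exists_ne_zero_of_sum_ne_zero ht
    exact (mem1 hs).1
  have ωmass : (∑ᶠ p : S × S, ω p) = 1 := by
    rw [finsum_eq_sum_of_support_subset _ ωsuppset, Finset.sum_product]
    calc ∑ t ∈ T, ∑ t' ∈ T, ω (t, t') = ∑ t ∈ T, Δ₁ t :=
          Finset.sum_congr rfl fun t _ => margl t
      _ = ∑ᶠ t, Δ₁ t := (finsum_eq_sum_of_support_subset _ suppΔ1).symm
      _ = 1 := hΔ1.2.2
  refine ⟨ω, ⟨⟨ωnn, ((T ×ˢ T).finite_toSet).subset ωsuppset, ωmass⟩, finsl, finsr⟩, ?_⟩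
  -- cost estimate
  have costsupp : Function.support (fun q : S × S => ω q * d q.1 q.2) ⊆ ↑(T ×ˢ T) := by
    intro p hp
    have h : ω p ≠ 0 := fun h => hp (by simp [h])
    have h2 := ωsupp h
    simp only [Finset.coe_product, Set.mem_prod, Finset.mem_coe]
    exact h2
  have cost1supp : Function.support (fun q : S × S => ω1 q * d' q.1 q.2) ⊆ ↑(T ×ˢ T) := by
    intro p hp
    have h : ω1 p ≠ 0 := fun h => hp (by simp [h])
    have h2 := mem1 (t := p.1) (s := p.2) (by simpa using h)
    simp only [Finset.coe_product, Set.mem_prod, Finset.mem_coe]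
    exact h2
  have cost2supp : Function.support (fun q : S × S => ω2 q * d' q.1 q.2) ⊆ ↑(T ×ˢ T) := by
    intro p hp
    have h : ω2 p ≠ 0 := fun h => hp (by simp [h])
    have h2 := mem2 (s := p.1) (t := p.2) (by simpa using h)
    simp only [Finset.coe_product, Set.mem_prod, Finset.mem_coe]
    exact h2
  rw [finsum_eq_sum_of_support_subset _ costsupp,
    finsum_eq_sum_of_support_subset _ cost1supp,
    finsum_eq_sum_of_support_subset _ cost2supp,
    Finset.sum_product, Finset.sum_product, Finset.sum_product]
  have hX : ∑ t ∈ T, ∑ t' ∈ T, ∑ s ∈ T, (ω1 (t, s) * d' t s / Δ₃ s) * ω2 (s, t')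
      = ∑ t ∈ T, ∑ s ∈ T, ω1 (t, s) * d' t s := by
    refine Finset.sum_congr rfl fun t _ => ?_
    rw [Finset.sum_comm]
    refine Finset.sum_congr rfl fun s _ => ?_
    rw [← Finset.mul_sum, r2 s]
    exact cancel_aux fun hz => by rw [z1 t s hz, zero_mul]
  have hY : ∑ t ∈ T, ∑ t' ∈ T, ∑ s ∈ T, (ω2 (s, t') * d' s t' / Δ₃ s) * ω1 (t, s)
      = ∑ s ∈ T, ∑ t' ∈ T, ω2 (s, t') * d' s t' := by
    rw [Finset.sum_comm]
    calc ∑ t' ∈ T, ∑ t ∈ T, ∑ s ∈ T, (ω2 (s, t') * d' s t' / Δ₃ s) * ω1 (t, s)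
        = ∑ t' ∈ T, ∑ s ∈ T, ∑ t ∈ T, (ω2 (s, t') * d' s t' / Δ₃ s) * ω1 (t, s) :=
          Finset.sum_congr rfl fun t' _ => Finset.sum_comm
      _ = ∑ t' ∈ T, ∑ s ∈ T, ω2 (s, t') * d' s t' := by
          refine Finset.sum_congr rfl fun t' _ => Finset.sum_congr rfl fun s _ => ?_
          rw [← Finset.mul_sum, c1 s]
          exact cancel_aux fun hz => by rw [z2 s t' hz, zero_mul]
      _ = ∑ s ∈ T, ∑ t' ∈ T, ω2 (s, t') * d' s t' := Finset.sum_comm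
  calc ∑ t ∈ T, ∑ t' ∈ T, ω (t, t') * d t t'
      = ∑ t ∈ T, ∑ t' ∈ T, ∑ s ∈ T, (ω1 (t, s) * ω2 (s, t') / Δ₃ s) * d t t' := by
        refine Finset.sum_congr rfl fun t _ => Finset.sum_congr rfl fun t' _ => ?_
        exact Finset.sum_mul _ _ _
    _ ≤ ∑ t ∈ T, ∑ t' ∈ T, ∑ s ∈ T, (ω1 (t, s) * ω2 (s, t') / Δ₃ s) * (d' t s + d' s t') := by
        refine Finset.sum_le_sum fun t _ => Finset.sum_le_sum fun t' _ =>
          Finset.sum_le_sum fun s _ => ?_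
        exact mul_le_mul_of_nonneg_left (htri t t' s)
          (div_nonneg (mul_nonneg (hω1pos _) (hω2pos _)) (h3nn s))
    _ = ∑ t ∈ T, ∑ t' ∈ T, ∑ s ∈ T,
          ((ω1 (t, s) * d' t s / Δ₃ s) * ω2 (s, t') + (ω2 (s, t') * d' s t' / Δ₃ s) * ω1 (t, s)) := by
        refine Finset.sum_congr rfl fun t _ => Finset.sum_congr rfl fun t' _ =>
          Finset.sum_congr rfl fun s _ => ?_
        ring
    _ = (∑ t ∈ T, ∑ t' ∈ T, ∑ s ∈ T, (ω1 (t, s) * d' t s / Δ₃ s) * ω2 (s, t')) +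
        (∑ t ∈ T, ∑ t' ∈ T, ∑ s ∈ T, (ω2 (s, t') * d' s t' / Δ₃ s) * ω1 (t, s)) := by
        simp only [Finset.sum_add_distrib]
    _ = (∑ t ∈ T, ∑ s ∈ T, ω1 (t, s) * d' t s) + ∑ s ∈ T, ∑ t' ∈ T, ω2 (s, t') * d' s t' := by
        rw [hX, hY]

end StmtAux

open StmtAux in
/-- Lemma `triangolareStrana`: a relaxed triangle inequality
between `d` and `d'` lifts through the Kantorovich lifting. -/
theorem stmt_2 {S : Type*} [Countable S] (d d' : S → S → ℝ)
    (hd : ∀ t t', d t t' ∈ Set.Icc (0 : ℝ) 1) (hd' : ∀ t t', d' t t' ∈ Set.Icc (0 : ℝ) 1)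
    (htri : ∀ t t' t'', d t t' ≤ d' t t'' + d' t'' t') :
    ∀ Δ₁ Δ₂ Δ₃ : S → ℝ, IsDist Δ₁ → IsDist Δ₂ → IsDist Δ₃ →
      Kant d Δ₁ Δ₂ ≤ Kant d' Δ₁ Δ₃ + Kant d' Δ₃ Δ₂ := by
  intro Δ₁ Δ₂ Δ₃ h1 h2 h3
  set A := {x | ∃ ω, IsMatching ω Δ₁ Δ₃ ∧ x = ∑ᶠ q : S × S, ω q * d' q.1 q.2} with hA
  set B := {x | ∃ ω, IsMatching ω Δ₃ Δ₂ ∧ x = ∑ᶠ q : S × S, ω q * d' q.1 q.2} with hB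
  set C := {x | ∃ ω, IsMatching ω Δ₁ Δ₂ ∧ x = ∑ᶠ q : S × S, ω q * d q.1 q.2} with hC
  have hAne : A.Nonempty := ⟨_, ⟨_, prod_matching h1 h3, rfl⟩⟩
  have hBne : B.Nonempty := ⟨_, ⟨_, prod_matching h3 h2, rfl⟩⟩
  have hCbdd : BddBelow C := by
    refine ⟨0, fun x hx => ?_⟩
    obtain ⟨ω, hω, rfl⟩ := hx
    exact finsum_nonneg fun q => mul_nonneg (hω.1.1 q) (hd _ _).1
  have key : ∀ a ∈ A, ∀ b ∈ B, Kant d Δ₁ Δ₂ ≤ a + b := by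
    intro a ha b hb
    obtain ⟨ω1, hω1, rfl⟩ := ha
    obtain ⟨ω2, hω2, rfl⟩ := hb
    obtain ⟨ω, hmω, hcost⟩ := glue d d' htri h1 hω1 hω2
    have hmem : (∑ᶠ q : S × S, ω q * d q.1 q.2) ∈ C := ⟨ω, hmω, rfl⟩
    exact le_trans (csInf_le hCbdd hmem) hcost
  have hKA : Kant d' Δ₁ Δ₃ = sInf A := rfl
  have hKB : Kant d' Δ₃ Δ₂ = sInf B := rfl
  have hKC : Kant d Δ₁ Δ₂ = sInf C := rfl
  have step1 : ∀ a ∈ A, Kant d Δ₁ Δ₂ - a ≤ Kant d' Δ₃ Δ₂ := by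
    intro a ha
    rw [hKB]
    exact le_csInf hBne fun b hb => sub_le_iff_le_add.2 (by
      have := key a ha b hb; linarith)
  have step2 : Kant d Δ₁ Δ₂ - Kant d' Δ₃ Δ₂ ≤ Kant d' Δ₁ Δ₃ := by
    rw [hKA]
    exact le_csInf hAne fun a ha => sub_le_comm.mp (step1 a ha)
  linarith
end

section
/- (Tolerance monotonicity.) For every image-finite pLTS, all terms t,t' ∈ S and all k1, k2 ∈ ℕ^+ with k1 < k2: if m^{k1}(t,t') = p1 and m^{k2}(t,t') = p2 then p1 ≤ p2; equivalently, m^{k1}(t,t') ≤ m^{k2}(t,t'). -/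
open scoped Classical

namespace Impact

noncomputable section

variable {S : Type*}

/-- A (nondeterministic probabilistic) labelled transition system, with a
distinguished deadlocked term, a silent action `tau` and a timed action `tick`.
Transitions take terms to (finite-support) distributions over terms. -/
structure PLTS (S : Type*) (Act : Type*) where
  dead : S
  tau : Act
  tick : Act
  Tr : S → Act → (S → ℝ) → Prop

/-- Infimum of a set of reals, with the convention `inf ∅ = 1`
(for `[0,1]`-bounded sets). -/
def inf1 (A : Set ℝ) : ℝ := sInf (insert 1 A)

/-- Supremum of a set of reals, with the convention `sup ∅ = 0`
(for `[0,1]`-bounded sets). -/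
def sup0 (A : Set ℝ) : ℝ := sSup (insert 0 A)

lemma my_finsum_mono {ι : Type*} {f g : ι → ℝ} (hf : (Function.support f).Finite)
    (hg : (Function.support g).Finite) (h : ∀ i, f i ≤ g i) :
    ∑ᶠ i, f i ≤ ∑ᶠ i, g i := by
  classical
  have hu : (Function.support f ∪ Function.support g).Finite := hf.union hg
  rw [finsum_eq_sum_of_support_subset f (s := hu.toFinset)
      (by simp [Set.subset_def]; intro x hx; exact Or.inl hx),
    finsum_eq_sum_of_support_subset g (s := hu.toFinset)
      (by simp [Set.subset_def]; intro x hx; exact Or.inr hx)]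
  exact Finset.sum_le_sum fun i _ => h i

lemma Kant_nonneg {d : S → S → ℝ} (hd : ∀ s u, 0 ≤ d s u) (Δ Θ : S → ℝ) :
    0 ≤ Kant d Δ Θ := by
  apply Real.sInf_nonneg
  rintro x ⟨ω, hω, rfl⟩
  exact finsum_nonneg fun q => mul_nonneg (hω.1.1 q) (hd q.1 q.2)

lemma Kant_mono {d d' : S → S → ℝ} (hd : ∀ s u, 0 ≤ d s u)
    (hdd : ∀ s u, d s u ≤ d' s u) (Δ Θ : S → ℝ) :
    Kant d Δ Θ ≤ Kant d' Δ Θ := by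
  set A := {x | ∃ ω, IsMatching ω Δ Θ ∧ x = ∑ᶠ q : S × S, ω q * d q.1 q.2} with hA
  set A' := {x | ∃ ω, IsMatching ω Δ Θ ∧ x = ∑ᶠ q : S × S, ω q * d' q.1 q.2} with hA'
  by_cases hne : A'.Nonempty
  · apply le_csInf hne
    rintro x ⟨ω, hω, rfl⟩
    have hbb : BddBelow A := ⟨0, by
      rintro y ⟨ω', hω', rfl⟩
      exact finsum_nonneg fun q => mul_nonneg (hω'.1.1 q) (hd q.1 q.2)⟩
    have hmem : (∑ᶠ q : S × S, ω q * d q.1 q.2) ∈ A := ⟨ω, hω, rfl⟩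
    refine (csInf_le hbb hmem).trans ?_
    refine my_finsum_mono ?_ ?_ fun q => mul_le_mul_of_nonneg_left (hdd q.1 q.2) (hω.1.1 q)
    · exact hω.1.2.1.subset fun q hq => by
        simp only [Function.mem_support] at hq ⊢; intro h0; apply hq; rw [h0, zero_mul]
    · exact hω.1.2.1.subset fun q hq => by
        simp only [Function.mem_support] at hq ⊢; intro h0; apply hq; rw [h0, zero_mul]
  · have h2 : ¬ A.Nonempty := by
      rintro ⟨x, ω, hω, rfl⟩; exact hne ⟨_, ω, hω, rfl⟩
    rw [Set.not_nonempty_iff_eq_empty] at hne h2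
    show sInf A ≤ sInf A'
    rw [hne, h2]

lemma inf1_nonneg {A : Set ℝ} (h : ∀ x ∈ A, 0 ≤ x) : 0 ≤ inf1 A := by
  apply Real.sInf_nonneg
  rintro x (rfl | hx)
  · norm_num
  · exact h x hx

lemma inf1_le_one {A : Set ℝ} (h : ∀ x ∈ A, 0 ≤ x) : inf1 A ≤ 1 := by
  refine csInf_le ⟨0, ?_⟩ (Set.mem_insert _ _)
  rintro x (rfl | hx)
  · norm_num
  · exact h x hx

lemma inf1_le_inf1 {A B : Set ℝ} (hA : ∀ x ∈ A, 0 ≤ x)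
    (h : ∀ y ∈ B, ∃ x ∈ A, x ≤ y) : inf1 A ≤ inf1 B := by
  have hbb : BddBelow (insert 1 A) := ⟨0, by
    rintro x (rfl | hx)
    · norm_num
    · exact hA x hx⟩
  apply le_csInf ⟨1, Set.mem_insert _ _⟩
  rintro b (rfl | hb)
  · exact csInf_le hbb (Set.mem_insert _ _)
  · obtain ⟨x, hx, hxb⟩ := h b hb
    exact (csInf_le hbb (Set.mem_insert_of_mem _ hx)).trans hxb

lemma sup0_nonneg {A : Set ℝ} : 0 ≤ sup0 A := by
  apply Real.sSup_nonneg'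
  exact ⟨0, Set.mem_insert _ _, le_rfl⟩

lemma sup0_le_one {A : Set ℝ} (h : ∀ x ∈ A, x ≤ 1) : sup0 A ≤ 1 := by
  apply csSup_le ⟨0, Set.mem_insert _ _⟩
  rintro x (rfl | hx)
  · norm_num
  · exact h x hx

lemma sup0_le_sup0 {A B : Set ℝ} (hB : ∀ y ∈ B, y ≤ 1)
    (h : ∀ x ∈ A, ∃ y ∈ B, x ≤ y) : sup0 A ≤ sup0 B := by
  have hba : BddAbove (insert 0 B) := ⟨1, by
    rintro y (rfl | hy)
    · norm_num
    · exact hB y hy⟩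
  apply csSup_le ⟨0, Set.mem_insert _ _⟩
  rintro x (rfl | hx)
  · exact le_csSup hba (Set.mem_insert _ _)
  · obtain ⟨y, hy, hxy⟩ := h x hx
    exact hxy.trans (le_csSup hba (Set.mem_insert_of_mem _ hy))


namespace PLTS

variable {S : Type*} {Act : Type*}

/-- Well-formedness: `tau ≠ tick`, the deadlocked term has no transitions, and
all transition targets are finite-support probability distributions. -/
def WellFormed (L : PLTS S Act) : Prop :=
  L.tau ≠ L.tick ∧ (∀ a Δ, ¬ L.Tr L.dead a Δ) ∧ ∀ t a Δ, L.Tr t a Δ → IsDist Δ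

/-- Image-finiteness of a pLTS. -/
def ImageFinite (L : PLTS S Act) : Prop := ∀ t a, {Δ | L.Tr t a Δ}.Finite

/-- `t →^{α̂} Δ` : hatted strong step (for `τ` it may also be the identity). -/
def hatStep (L : PLTS S Act) (t : S) (a : Act) (Δ : S → ℝ) : Prop :=
  L.Tr t a Δ ∨ (a = L.tau ∧ Δ = dirac t)

/-- Lifting of the hatted step to sub-distributions: a nonempty part `J` of the
support moves (all of it, in case `a = τ`), the rest cannot move. -/
def liftStep (L : PLTS S Act) (a : Act) (Δ Θ : S → ℝ) : Prop :=
  ∃ (J : Set S) (g : S → S → ℝ),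
    J ⊆ Function.support Δ ∧ J.Nonempty ∧
    (∀ t ∈ J, L.hatStep t a (g t)) ∧
    (∀ t ∈ Function.support Δ, t ∉ J → ∀ Θ', ¬ L.hatStep t a Θ') ∧
    Θ = fun s => ∑ᶠ t ∈ J, Δ t * g t s

/-- The weak internal transition `⇒^{τ̂}`: reflexive-transitive closure of the
lifted `τ̂`-step. -/
def wtau (L : PLTS S Act) : (S → ℝ) → (S → ℝ) → Prop :=
  Relation.ReflTransGen (L.liftStep L.tau)

/-- Weak transitions: `⇒^{τ̂}` for `a = τ`, and `⇒^{τ̂}→^{α̂}⇒^{τ̂}` otherwise. -/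
def wstep (L : PLTS S Act) (a : Act) (Δ Θ : S → ℝ) : Prop :=
  if a = L.tau then L.wtau Δ Θ
  else ∃ Δ₁ Δ₂, L.wtau Δ Δ₁ ∧ L.liftStep a Δ₁ Δ₂ ∧ L.wtau Δ₂ Θ

/-- `pad Δ = Δ + (1 - |Δ|)·δ_dead` : send the missing mass of a sub-distribution
to the deadlocked term. -/
def pad (L : PLTS S Act) (Δ : S → ℝ) : S → ℝ :=
  fun s => Δ s + (1 - mass Δ) * dirac L.dead s

/-- The functional `B` for untimed actions. -/
def Bfun (L : PLTS S Act) (d : S → S → ℝ) : S → S → ℝ := fun t t' =>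
  max (d t t') (max
    (sup0 {x | ∃ a, a ≠ L.tick ∧ ∃ Δ, L.Tr t a Δ ∧
      x = inf1 {y | ∃ Θ, L.wstep a (dirac t') Θ ∧ y = Kant d Δ (L.pad Θ)}})
    (sup0 {x | ∃ a, a ≠ L.tick ∧ ∃ Θ, L.Tr t' a Θ ∧
      x = inf1 {y | ∃ Δ, L.wstep a (dirac t) Δ ∧ y = Kant d (L.pad Δ) Θ}}))

/-- The functional `B_tick` for the timed action. -/
def Btick (L : PLTS S Act) (d : S → S → ℝ) : S → S → ℝ := fun t t' =>
  max (d t t') (max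
    (sup0 {x | ∃ Δ, L.Tr t L.tick Δ ∧
      x = inf1 {y | ∃ Θ, L.wstep L.tick (dirac t') Θ ∧ y = Kant d Δ (L.pad Θ)}})
    (sup0 {x | ∃ Θ, L.Tr t' L.tick Θ ∧
      x = inf1 {y | ∃ Δ, L.wstep L.tick (dirac t) Δ ∧ y = Kant d (L.pad Δ) Θ}}))

/-- The functional `B'` combining `B` and `B_tick`. -/
def Bprime (L : PLTS S Act) (d : S → S → ℝ) : S → S → ℝ := fun t t' =>
  max (L.Bfun d t t') (L.Btick d t t')

/-- `mkh L base h` is the metric `m^{k,h}` when `base = m^{k-1}`. -/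
def mkh (L : PLTS S Act) (base : S → S → ℝ) : ℕ → S → S → ℝ
  | 0 => L.Btick base
  | h + 1 => L.Bfun (mkh L base h)

/-- The timed weak bisimilarity metrics `m^k`. -/
def mT (L : PLTS S Act) : ℕ → S → S → ℝ
  | 0 => fun _ _ => 0
  | k + 1 => fun t t' => ⨆ h : ℕ, mkh L (mT L k) h t t'

/-- The metric `m^∞ = sup_k m^k`. -/
def mInf (L : PLTS S Act) : S → S → ℝ := fun t t' => ⨆ k : ℕ, L.mT k t t'



variable (L : PLTS S Act)

lemma Bfun_nonneg {d : S → S → ℝ} (hd : ∀ s u, 0 ≤ d s u) (t t' : S) :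
    0 ≤ L.Bfun d t t' := le_trans (hd t t') (le_max_left _ _)

lemma Btick_nonneg {d : S → S → ℝ} (hd : ∀ s u, 0 ≤ d s u) (t t' : S) :
    0 ≤ L.Btick d t t' := le_trans (hd t t') (le_max_left _ _)

lemma Bfun_le_one {d : S → S → ℝ} (hd0 : ∀ s u, 0 ≤ d s u)
    (hd1 : ∀ s u, d s u ≤ 1) (t t' : S) : L.Bfun d t t' ≤ 1 := by
  refine max_le (hd1 t t') (max_le ?_ ?_)
  · apply sup0_le_one
    rintro x ⟨a, ha, Δ, hTr, rfl⟩
    apply inf1_le_one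
    rintro y ⟨Θ, hw, rfl⟩
    exact Kant_nonneg hd0 _ _
  · apply sup0_le_one
    rintro x ⟨a, ha, Θ, hTr, rfl⟩
    apply inf1_le_one
    rintro y ⟨Δ, hw, rfl⟩
    exact Kant_nonneg hd0 _ _

lemma Btick_le_one {d : S → S → ℝ} (hd0 : ∀ s u, 0 ≤ d s u)
    (hd1 : ∀ s u, d s u ≤ 1) (t t' : S) : L.Btick d t t' ≤ 1 := by
  refine max_le (hd1 t t') (max_le ?_ ?_)
  · apply sup0_le_one
    rintro x ⟨Δ, hTr, rfl⟩
    apply inf1_le_one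
    rintro y ⟨Θ, hw, rfl⟩
    exact Kant_nonneg hd0 _ _
  · apply sup0_le_one
    rintro x ⟨Θ, hTr, rfl⟩
    apply inf1_le_one
    rintro y ⟨Δ, hw, rfl⟩
    exact Kant_nonneg hd0 _ _

lemma Bfun_mono {d d' : S → S → ℝ} (hd0 : ∀ s u, 0 ≤ d s u)
    (hdd : ∀ s u, d s u ≤ d' s u) (t t' : S) :
    L.Bfun d t t' ≤ L.Bfun d' t t' := by
  have hd0' : ∀ s u, 0 ≤ d' s u := fun s u => (hd0 s u).trans (hdd s u)
  refine max_le_max (hdd t t') (max_le_max ?_ ?_)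
  · refine sup0_le_sup0 ?_ ?_
    · rintro y ⟨a, ha, Δ, hTr, rfl⟩
      exact inf1_le_one (by rintro z ⟨Θ, hw, rfl⟩; exact Kant_nonneg hd0' _ _)
    · rintro x ⟨a, ha, Δ, hTr, rfl⟩
      refine ⟨_, ⟨a, ha, Δ, hTr, rfl⟩, ?_⟩
      refine inf1_le_inf1 (by rintro z ⟨Θ, hw, rfl⟩; exact Kant_nonneg hd0 _ _) ?_
      rintro y ⟨Θ, hw, rfl⟩
      exact ⟨_, ⟨Θ, hw, rfl⟩, Kant_mono hd0 hdd _ _⟩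
  · refine sup0_le_sup0 ?_ ?_
    · rintro y ⟨a, ha, Θ, hTr, rfl⟩
      exact inf1_le_one (by rintro z ⟨Δ, hw, rfl⟩; exact Kant_nonneg hd0' _ _)
    · rintro x ⟨a, ha, Θ, hTr, rfl⟩
      refine ⟨_, ⟨a, ha, Θ, hTr, rfl⟩, ?_⟩
      refine inf1_le_inf1 (by rintro z ⟨Δ, hw, rfl⟩; exact Kant_nonneg hd0 _ _) ?_
      rintro y ⟨Δ, hw, rfl⟩
      exact ⟨_, ⟨Δ, hw, rfl⟩, Kant_mono hd0 hdd _ _⟩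

lemma Btick_mono {d d' : S → S → ℝ} (hd0 : ∀ s u, 0 ≤ d s u)
    (hdd : ∀ s u, d s u ≤ d' s u) (t t' : S) :
    L.Btick d t t' ≤ L.Btick d' t t' := by
  have hd0' : ∀ s u, 0 ≤ d' s u := fun s u => (hd0 s u).trans (hdd s u)
  refine max_le_max (hdd t t') (max_le_max ?_ ?_)
  · refine sup0_le_sup0 ?_ ?_
    · rintro y ⟨Δ, hTr, rfl⟩
      exact inf1_le_one (by rintro z ⟨Θ, hw, rfl⟩; exact Kant_nonneg hd0' _ _)
    · rintro x ⟨Δ, hTr, rfl⟩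
      refine ⟨_, ⟨Δ, hTr, rfl⟩, ?_⟩
      refine inf1_le_inf1 (by rintro z ⟨Θ, hw, rfl⟩; exact Kant_nonneg hd0 _ _) ?_
      rintro y ⟨Θ, hw, rfl⟩
      exact ⟨_, ⟨Θ, hw, rfl⟩, Kant_mono hd0 hdd _ _⟩
  · refine sup0_le_sup0 ?_ ?_
    · rintro y ⟨Θ, hTr, rfl⟩
      exact inf1_le_one (by rintro z ⟨Δ, hw, rfl⟩; exact Kant_nonneg hd0' _ _)
    · rintro x ⟨Θ, hTr, rfl⟩
      refine ⟨_, ⟨Θ, hTr, rfl⟩, ?_⟩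
      refine inf1_le_inf1 (by rintro z ⟨Δ, hw, rfl⟩; exact Kant_nonneg hd0 _ _) ?_
      rintro y ⟨Δ, hw, rfl⟩
      exact ⟨_, ⟨Δ, hw, rfl⟩, Kant_mono hd0 hdd _ _⟩

lemma mkh_nonneg {base : S → S → ℝ} (hb : ∀ s u, 0 ≤ base s u) :
    ∀ h t t', 0 ≤ L.mkh base h t t'
  | 0 => L.Btick_nonneg hb
  | h + 1 => L.Bfun_nonneg (mkh_nonneg hb h)

lemma mkh_le_one {base : S → S → ℝ} (hb0 : ∀ s u, 0 ≤ base s u)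
    (hb1 : ∀ s u, base s u ≤ 1) :
    ∀ h t t', L.mkh base h t t' ≤ 1
  | 0 => L.Btick_le_one hb0 hb1
  | h + 1 => L.Bfun_le_one (L.mkh_nonneg hb0 h) (mkh_le_one hb0 hb1 h)

lemma mkh_mono {base base' : S → S → ℝ} (hb0 : ∀ s u, 0 ≤ base s u)
    (hbb : ∀ s u, base s u ≤ base' s u) :
    ∀ h t t', L.mkh base h t t' ≤ L.mkh base' h t t'
  | 0 => L.Btick_mono hb0 hbb
  | h + 1 => L.Bfun_mono (L.mkh_nonneg hb0 h) (mkh_mono hb0 hbb h)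

lemma mT_bounds : ∀ k, ∀ t t' : S, 0 ≤ L.mT k t t' ∧ L.mT k t t' ≤ 1 := by
  intro k
  induction k with
  | zero => intro t t'; simp [mT]
  | succ k ih =>
    intro t t'
    have h0 : ∀ s u, 0 ≤ L.mT k s u := fun s u => (ih s u).1
    have h1 : ∀ s u, L.mT k s u ≤ 1 := fun s u => (ih s u).2
    have hbd : BddAbove (Set.range fun h => L.mkh (L.mT k) h t t') :=
      ⟨1, by rintro x ⟨h, rfl⟩; exact L.mkh_le_one h0 h1 h t t'⟩
    constructor
    · exact (L.mkh_nonneg h0 0 t t').trans (le_ciSup hbd 0)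
    · exact Real.iSup_le (fun h => L.mkh_le_one h0 h1 h t t') zero_le_one

lemma mT_succ_le (k : ℕ) (t t' : S) : L.mT k t t' ≤ L.mT (k + 1) t t' := by
  induction k generalizing t t' with
  | zero => exact (L.mT_bounds 1 t t').1
  | succ k ih =>
    have h0 : ∀ s u, 0 ≤ L.mT k s u := fun s u => (L.mT_bounds k s u).1
    have h0' : ∀ s u, 0 ≤ L.mT (k+1) s u := fun s u => (L.mT_bounds (k+1) s u).1
    have h1' : ∀ s u, L.mT (k+1) s u ≤ 1 := fun s u => (L.mT_bounds (k+1) s u).2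
    have hbd : BddAbove (Set.range fun h => L.mkh (L.mT (k+1)) h t t') :=
      ⟨1, by rintro x ⟨h, rfl⟩; exact L.mkh_le_one h0' h1' h t t'⟩
    refine Real.iSup_le (fun h => ?_) ((L.mT_bounds (k+2) t t').1)
    exact (L.mkh_mono h0 ih h t t').trans (le_ciSup hbd h)

lemma mT_mono {k₁ k₂ : ℕ} (h : k₁ ≤ k₂) (t t' : S) :
    L.mT k₁ t t' ≤ L.mT k₂ t t' :=
  monotone_nat_of_le_succ (fun k => L.mT_succ_le k t t') h


/-- A weak probabilistic bisimulation. -/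
def IsWeakBisim (L : PLTS S Act) (R : S → S → Prop) : Prop :=
  (∀ t t', R t t' → R t' t) ∧
  ∀ t t', R t t' → ∀ a Δ, L.Tr t a Δ →
    ∃ Θ, L.wstep a (dirac t') Θ ∧ mass Θ = 1 ∧
      ∃ ω, IsMatching ω Δ Θ ∧ ∀ s u, 0 < ω (s, u) → R s u

/-- Weak probabilistic bisimilarity `t ≈ t'`. -/
def WBisim (L : PLTS S Act) (t t' : S) : Prop := ∃ R, IsWeakBisim L R ∧ R t t'

end PLTS

end

end Impact

open Impact

/-- Tolerance monotonicity: the distance between terms does not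
decrease when more tick-steps are considered. -/
theorem stmt_5 {S : Type*} {Act : Type*} (L : PLTS S Act)
    (hwf : L.WellFormed) (hif : L.ImageFinite)
    (t t' : S) (k₁ k₂ : ℕ) (hk₁ : 1 ≤ k₁) (hk₁₂ : k₁ < k₂)
    (p₁ p₂ : ℝ) (h₁ : L.mT k₁ t t' = p₁) (h₂ : L.mT k₂ t t' = p₂) :
    p₁ ≤ p₂ := by
  subst h₁ h₂
  exact L.mT_mono (le_of_lt hk₁₂) t t'
end
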